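/- The sum-of-squares conjunction encoding is correct: let k : ℕ, let pairs be a list of pairs of nat-polynomials each of all-length k, and let vars be a variable list of length k. Then evalNatPoly (conjEncode pairs).1 vars = evalNatPoly (conjEncode pairs).2 vars if and only if for every pair (p, n) in pairs, evalNatPoly p vars = evalNatPoly n vars. -/

import Mathlib

namespace Rice

/-- A program maps an input and a fuel bound to an optional output. -/
def Program := ℕ → ℕ → Option ℕ

/-- Observational equivalence: eventual agreement at every input. -/
def ObsEquiv (e f : Program) : Prop :=
  ∀ x, ∃ N, ∀ k, k ≥ N → e x k = f x k

/-- Stable termination on input 0. -/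
def TerminatesPred (e : Program) : Prop :=
  ∃ fuel v, e 0 fuel = some v ∧ ∀ fuel', fuel' ≥ fuel → e 0 fuel' = some v

/-- A program is stable (monotone in fuel). -/
def Stable (e : Program) : Prop :=
  ∀ x k v, e x k = some v → ∀ k', k' ≥ k → e x k' = some v

/-- The always-diverging program. -/
def diverge : Program := fun _ _ => none

/-- The always-halting program. -/
def halt : Program := fun _ _ => some 0

/-- Integer-coefficient polynomials as lists of monomials. -/
abbrev Poly := List (ℤ × List ℕ)

def evalMonomial (m : ℤ × List ℕ) (vars : List ℕ) : ℤ :=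
  m.1 * (List.foldl (fun acc p => acc * (p.1 : ℤ) ^ p.2) 1 (vars.zip m.2))

def evalPoly (P : Poly) (vars : List ℕ) : ℤ :=
  List.foldl (fun acc m => acc + evalMonomial m vars) 0 P

def cantorPair (a b : ℕ) : ℕ := (a + b) * (a + b + 1) / 2 + b
def cantorW (n : ℕ) : ℕ := (Nat.sqrt (8 * n + 1) - 1) / 2
def cantorUnpairSnd (n : ℕ) : ℕ := n - (cantorW n) * (cantorW n + 1) / 2
def cantorUnpairFst (n : ℕ) : ℕ := cantorW n - cantorUnpairSnd n

def decodeK : ℕ → ℕ → List ℕ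
  | 0, _ => []
  | 1, n => [n]
  | k + 2, n => decodeK (k + 1) (cantorUnpairFst n) ++ [cantorUnpairSnd n]

def checkSolution (ar : ℕ) (P : Poly) (n : ℕ) : Bool :=
  decide (evalPoly P (decodeK ar n) = 0)

def isSolvable (ar : ℕ) (P : Poly) : Prop := ∃ n, checkSolution ar P n = true
def isUnsolvable (ar : ℕ) (P : Poly) : Prop := ∀ n, checkSolution ar P n = false

def findSol (ar : ℕ) (P : Poly) : ℕ → Option ℕ
  | 0 => if checkSolution ar P 0 then some 0 else none
  | k + 1 =>
    match findSol ar P k with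
    | some n => some n
    | none => if checkSolution ar P (k + 1) then some (k + 1) else none

/-- The two-witness construction. -/
def S_D (e0 e1 : Program) (ar : ℕ) (D : Poly) (b : Bool) : Program :=
  fun x fuel =>
    match findSol ar D fuel with
    | some _ => (if b then e1 else e0) x fuel
    | none => none

/-- h10c constraints. -/
inductive h10c where
  | one : ℕ → h10c
  | plus : ℕ → ℕ → ℕ → h10c
  | mult : ℕ → ℕ → ℕ → h10c

def h10cSem (c : h10c) (φ : ℕ → ℕ) : Prop :=
  match c with
  | .one x => φ x = 1
  | .plus x y z => φ x + φ y = φ z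
  | .mult x y z => φ x * φ y = φ z

def H10C_SAT (cs : List h10c) : Prop := ∃ φ : ℕ → ℕ, ∀ c ∈ cs, h10cSem c φ

/-- Nat-coefficient polynomials. -/
abbrev NatPoly := List (ℕ × List ℕ)

def evalNatMonomial (m : ℕ × List ℕ) (vars : List ℕ) : ℕ :=
  m.1 * (List.foldl (fun acc p => acc * p.1 ^ p.2) 1 (vars.zip m.2))

def evalNatPoly (P : NatPoly) (vars : List ℕ) : ℕ :=
  List.foldl (fun acc m => acc + evalNatMonomial m vars) 0 P

def posMonomials (P : Poly) : NatPoly :=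
  P.filterMap (fun m => if 0 < m.1 then some (m.1.toNat, m.2) else none)

def negMonomials (P : Poly) : NatPoly :=
  P.filterMap (fun m => if m.1 < 0 then some ((-m.1).toNat, m.2) else none)

/-- An h10c instance: arity, positive part, negative part. -/
abbrev H10cInst := ℕ × NatPoly × NatPoly

def H10cSat (inst : H10cInst) : Prop :=
  ∃ n, evalNatPoly inst.2.1 (decodeK inst.1 n) = evalNatPoly inst.2.2 (decodeK inst.1 n)

def h10cToPoly (inst : H10cInst) : Poly :=
  inst.2.1.map (fun m => ((m.1 : ℤ), m.2)) ++ inst.2.2.map (fun m => (-(m.1 : ℤ), m.2))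

/-- Pointwise addition of exponent lists. -/
def map2Add : List ℕ → List ℕ → List ℕ
  | x :: xs, y :: ys => (x + y) :: map2Add xs ys
  | _, _ => []

def monoMult (m1 m2 : ℕ × List ℕ) : ℕ × List ℕ := (m1.1 * m2.1, map2Add m1.2 m2.2)

def polyMult (p1 p2 : NatPoly) : NatPoly := p1.flatMap (fun m1 => p2.map (monoMult m1))

def polyScale (c : ℕ) (p : NatPoly) : NatPoly := p.map (fun m => (c * m.1, m.2))

def polySq (p : NatPoly) : NatPoly := polyMult p p

/-- Sum-of-squares conjunction encoding. -/
def conjEncode : List (NatPoly × NatPoly) → NatPoly × NatPoly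
  | [] => ([], [])
  | (p, n) :: rest =>
    let r := conjEncode rest
    (polySq p ++ polySq n ++ r.1, polyScale 2 (polyMult p n) ++ r.2)

/-- All exponent lists have length k. -/
def allLen (k : ℕ) (p : NatPoly) : Prop := ∀ m ∈ p, m.2.length = k

/-!
Evaluation turns `++` into `+` and `polyMult` into `*` (given matching exponent lengths), so
`conjEncode` evaluates to `∑ (pᵢ² + nᵢ²)` against `∑ 2 pᵢ nᵢ`. Each summand on the left dominates the
corresponding one on the right (AM-GM), so the sums agree iff every pair of summands does, and
`p² + n² = 2pn` iff `p = n`.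
-/

theorem List.sum_map_eq_sum_map_iff_of_le {ι M : Type*} [AddCommMonoid M] [PartialOrder M]
    [IsOrderedCancelAddMonoid M] {l : List ι} {f g : ι → M} (h : ∀ i ∈ l, f i ≤ g i) :
    (l.map f).sum = (l.map g).sum ↔ ∀ i ∈ l, f i = g i := by
  induction l with
  | nil => simp
  | cons i l ih =>
    rw [List.forall_mem_cons] at h ⊢
    rw [List.map_cons, List.map_cons, List.sum_cons, List.sum_cons,
      add_eq_add_iff_eq_and_eq h.1 (List.sum_le_sum h.2), ih h.2]

theorem Nat.two_mul_mul_eq_sq_add_sq_iff {a b : ℕ} : 2 * a * b = a ^ 2 + b ^ 2 ↔ a = b := by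
  constructor
  · intro h
    have hsq : ((a : ℤ) - b) ^ 2 = 0 := by
      have hz : (2 * a * b : ℤ) = a ^ 2 + b ^ 2 := by exact_mod_cast h
      linear_combination -hz
    exact_mod_cast sub_eq_zero.mp (pow_eq_zero_iff two_ne_zero |>.mp hsq)
  · rintro rfl
    ring

theorem evalNatPoly_eq_sum (P : NatPoly) (vars : List ℕ) :
    evalNatPoly P vars = (P.map (evalNatMonomial · vars)).sum := by
  rw [evalNatPoly, List.sum_eq_foldl, List.foldl_map]

theorem evalNatMonomial_eq (m : ℕ × List ℕ) (vars : List ℕ) :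
    evalNatMonomial m vars = m.1 * ((vars.zip m.2).map fun p => p.1 ^ p.2).prod := by
  rw [evalNatMonomial, List.prod_eq_foldl, List.foldl_map]

theorem evalNatPoly_append (P Q : NatPoly) (vars : List ℕ) :
    evalNatPoly (P ++ Q) vars = evalNatPoly P vars + evalNatPoly Q vars := by
  simp only [evalNatPoly_eq_sum, List.map_append, List.sum_append]

theorem evalNatPoly_polyScale (c : ℕ) (P : NatPoly) (vars : List ℕ) :
    evalNatPoly (polyScale c P) vars = c * evalNatPoly P vars := by
  simp only [evalNatPoly_eq_sum, polyScale, List.map_map, Function.comp_def, evalNatMonomial,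
    mul_assoc, List.sum_map_mul_left]

theorem prod_zip_map2Add_pow {M : Type*} [CommMonoid M] {vars : List M} {e₁ e₂ : List ℕ}
    (h₁ : e₁.length = vars.length) (h₂ : e₂.length = vars.length) :
    ((vars.zip (map2Add e₁ e₂)).map fun p => p.1 ^ p.2).prod =
      ((vars.zip e₁).map fun p => p.1 ^ p.2).prod * ((vars.zip e₂).map fun p => p.1 ^ p.2).prod := by
  induction vars generalizing e₁ e₂ with
  | nil => simp
  | cons v vars ih =>
    obtain _ | ⟨a, e₁⟩ := e₁
    · simp at h₁
    obtain _ | ⟨b, e₂⟩ := e₂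
    · simp at h₂
    simp only [List.length_cons, Nat.add_right_cancel_iff] at h₁ h₂
    simp only [map2Add, List.zip_cons_cons, List.map_cons, List.prod_cons, ih h₁ h₂, pow_add]
    ac_rfl

theorem evalNatMonomial_monoMult {m₁ m₂ : ℕ × List ℕ} {vars : List ℕ}
    (h₁ : m₁.2.length = vars.length) (h₂ : m₂.2.length = vars.length) :
    evalNatMonomial (monoMult m₁ m₂) vars = evalNatMonomial m₁ vars * evalNatMonomial m₂ vars := by
  simp only [evalNatMonomial_eq, monoMult, prod_zip_map2Add_pow h₁ h₂]
  ring

theorem evalNatPoly_map_monoMult {m : ℕ × List ℕ} {Q : NatPoly} {vars : List ℕ}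
    (hm : m.2.length = vars.length) (hQ : allLen vars.length Q) :
    evalNatPoly (Q.map (monoMult m)) vars = evalNatMonomial m vars * evalNatPoly Q vars := by
  rw [evalNatPoly_eq_sum, evalNatPoly_eq_sum, List.map_map, ← List.sum_map_mul_left]
  exact congrArg List.sum <| List.map_congr_left fun m' hm' => evalNatMonomial_monoMult hm (hQ m' hm')

theorem evalNatPoly_polyMult {P Q : NatPoly} {vars : List ℕ}
    (hP : allLen vars.length P) (hQ : allLen vars.length Q) :
    evalNatPoly (polyMult P Q) vars = evalNatPoly P vars * evalNatPoly Q vars := by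
  induction P with
  | nil => exact (zero_mul _).symm
  | cons m P ih =>
    have hm : m.2.length = vars.length := hP m List.mem_cons_self
    have hP' : allLen vars.length P := fun m' hm' => hP m' (List.mem_cons_of_mem m hm')
    have hcons : polyMult (m :: P) Q = Q.map (monoMult m) ++ polyMult P Q := List.flatMap_cons
    rw [hcons, evalNatPoly_append, evalNatPoly_map_monoMult hm hQ, ih hP',
      evalNatPoly_eq_sum (m :: P), List.map_cons, List.sum_cons, ← evalNatPoly_eq_sum, add_mul]

section conjEncode

variable {pairs : List (NatPoly × NatPoly)} {vars : List ℕ}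

theorem evalNatPoly_conjEncode_fst
    (hall : ∀ pr ∈ pairs, allLen vars.length pr.1 ∧ allLen vars.length pr.2) :
    evalNatPoly (conjEncode pairs).1 vars =
      (pairs.map fun pr => evalNatPoly pr.1 vars ^ 2 + evalNatPoly pr.2 vars ^ 2).sum := by
  induction pairs with
  | nil => rfl
  | cons pr rest ih =>
    rw [List.forall_mem_cons] at hall
    obtain ⟨⟨hp, hn⟩, hrest⟩ := hall
    simp only [conjEncode, evalNatPoly_append, polySq, evalNatPoly_polyMult hp hp,
      evalNatPoly_polyMult hn hn, ih hrest, List.map_cons, List.sum_cons]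
    ring

theorem evalNatPoly_conjEncode_snd
    (hall : ∀ pr ∈ pairs, allLen vars.length pr.1 ∧ allLen vars.length pr.2) :
    evalNatPoly (conjEncode pairs).2 vars =
      (pairs.map fun pr => 2 * evalNatPoly pr.1 vars * evalNatPoly pr.2 vars).sum := by
  induction pairs with
  | nil => rfl
  | cons pr rest ih =>
    rw [List.forall_mem_cons] at hall
    obtain ⟨⟨hp, hn⟩, hrest⟩ := hall
    simp only [conjEncode, evalNatPoly_append, evalNatPoly_polyScale, evalNatPoly_polyMult hp hn,
      ih hrest, List.map_cons, List.sum_cons]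
    ring

end conjEncode

/-- Correctness of the sum-of-squares conjunction encoding. -/
theorem conjEncode_correct (k : ℕ) (pairs : List (NatPoly × NatPoly)) (vars : List ℕ)
    (hlen : vars.length = k)
    (hall : ∀ pr ∈ pairs, allLen k pr.1 ∧ allLen k pr.2) :
    evalNatPoly (conjEncode pairs).1 vars = evalNatPoly (conjEncode pairs).2 vars ↔
      ∀ pr ∈ pairs, evalNatPoly pr.1 vars = evalNatPoly pr.2 vars := by
  subst hlen
  rw [evalNatPoly_conjEncode_fst hall, evalNatPoly_conjEncode_snd hall, eq_comm,
    List.sum_map_eq_sum_map_iff_of_le fun _ _ => two_mul_le_add_sq _ _]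
  exact forall₂_congr fun _ _ => Nat.two_mul_mul_eq_sq_add_sq_iff

end Rice
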